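/- Let M and N be subspaces of ℂ^n in generalized generic position: M∩N = M^⊥∩N^⊥ = {0} and dim(M∩N^⊥) = dim(M^⊥∩N), with dim M = dim N = p. If θ_1 ≤ ⋯ ≤ θ_p are the principal angles between M and N and η_1 ≤ ⋯ ≤ η_p are the principal angles between M^⊥ and N^⊥, then θ_i = η_i for all i = 1,...,p. -/

import Mathlib

/-!
Principal vectors `u i ∈ M`, `v i ∈ N` are orthonormal bases with `⟪u i, v j⟫ = δᵢⱼ cos θᵢ`;
any pair of orthonormal bases with a real diagonal cross Gram matrix will be called diagonal.
Since `M ⊓ N = ⊥`, every `cos θᵢ < 1`, and rotating each plane `span {u i, v i}` by a right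
angle gives a diagonal pair of `(Mᗮ, Nᗮ)` with the same cosines; the genericity assumptions force
`dim Mᗮ = dim Nᗮ = p`, so these are bases. For any diagonal pair of `(A, B)` and `x ∈ A`,
`‖P_B x‖² = ∑ cᵢ² ‖⟪uᵢ, x⟫‖²`, so the decreasingly sorted `cᵢ²` are the eigenvalues of the
quadratic form `x ↦ ‖P_B x‖²` on `A`, unique by the Courant–Fischer argument.
-/

open scoped ComplexInnerProductSpace

/-- Principal system for `(M, N)` (recursive definition of principal angles/vectors). -/
def IsPrincipalSystem {n q : ℕ} (M N : Submodule ℂ (EuclideanSpace ℂ (Fin n)))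
    (u v : Fin q → EuclideanSpace ℂ (Fin n)) (θ : Fin q → ℝ) : Prop :=
  ∀ i : Fin q,
    u i ∈ M ∧ v i ∈ N ∧ ‖u i‖ = 1 ∧ ‖v i‖ = 1 ∧
    (∀ j : Fin q, j < i → ⟪u j, u i⟫ = 0 ∧ ⟪v j, v i⟫ = 0) ∧
    θ i ∈ Set.Icc 0 (Real.pi / 2) ∧
    ⟪u i, v i⟫ = (Real.cos (θ i) : ℂ) ∧
    ∀ x ∈ M, ∀ y ∈ N, ‖x‖ = 1 → ‖y‖ = 1 →
      (∀ j : Fin q, j < i → ⟪u j, x⟫ = 0) →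
      (∀ j : Fin q, j < i → ⟪v j, y⟫ = 0) →
      ‖⟪x, y⟫‖ ≤ Real.cos (θ i)

open Module Submodule Set
open scoped InnerProductSpace

section

variable {𝕜 E ι : Type*} [RCLike 𝕜] [NormedAddCommGroup E] [InnerProductSpace 𝕜 E]

lemma mem_orthogonal_span_range_iff {w : ι → E} {y : E} :
    y ∈ (span 𝕜 (range w))ᗮ ↔ ∀ i, ⟪w i, y⟫_𝕜 = 0 := by
  refine ⟨fun hy i => inner_right_of_mem_orthogonal (subset_span (mem_range_self i)) hy,
    fun h => ?_⟩
  have hle : span 𝕜 (range w) ≤ (𝕜 ∙ y)ᗮ := by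
    rw [span_le]
    rintro _ ⟨i, rfl⟩
    exact mem_orthogonal_singleton_iff_inner_left.2 (h i)
  rw [mem_orthogonal]
  exact fun u hu => mem_orthogonal_singleton_iff_inner_left.1 (hle hu)

lemma inf_ne_bot_of_finrank_lt_add {K V : Type*} [DivisionRing K] [AddCommGroup V] [Module K V]
    {U U' W : Submodule K V} [FiniteDimensional K W] (hU : U ≤ W) (hU' : U' ≤ W)
    (h : finrank K W < finrank K U + finrank K U') : U ⊓ U' ≠ ⊥ := by
  have := finiteDimensional_of_le hU
  have := finiteDimensional_of_le hU'
  intro hbot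
  have hsum := finrank_sup_add_finrank_inf_eq U U'
  have hsup := finrank_mono (sup_le hU hU')
  rw [hbot, finrank_bot] at hsum
  omega

lemma finrank_orthogonal_eq_of_inf_eq_bot [FiniteDimensional 𝕜 E] {M N : Submodule 𝕜 E}
    (hMN : M ⊓ N = ⊥) (hMN' : Mᗮ ⊓ Nᗮ = ⊥) (h : finrank 𝕜 M = finrank 𝕜 N) :
    finrank 𝕜 Mᗮ = finrank 𝕜 M := by
  have hsum := finrank_sup_add_finrank_inf_eq M N
  have hsum' := finrank_sup_add_finrank_inf_eq Mᗮ Nᗮ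
  rw [hMN, finrank_bot] at hsum
  rw [hMN', finrank_bot] at hsum'
  have := (M ⊔ N).finrank_le
  have := (Mᗮ ⊔ Nᗮ).finrank_le
  have := M.finrank_add_finrank_orthogonal
  have := N.finrank_add_finrank_orthogonal
  omega

namespace Orthonormal

variable {w : ι → E}

lemma mem_of_inner_ne_zero (hw : Orthonormal 𝕜 w) {S : Set ι} {x : E}
    (hx : x ∈ span 𝕜 (range (w ∘ ((↑) : S → ι)))) {j : ι} (hj : ⟪w j, x⟫_𝕜 ≠ 0) : j ∈ S :=
  by_contra fun hjS => hj <| inner_left_of_mem_orthogonal hx <|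
    mem_orthogonal_span_range_iff.2 fun i => hw.inner_eq_zero fun h => hjS (h ▸ i.2)

lemma span_range_eq_of_finrank_eq [Fintype ι] (hw : Orthonormal 𝕜 w) {W : Submodule 𝕜 E}
    [FiniteDimensional 𝕜 W] (hmem : ∀ i, w i ∈ W) (hW : finrank 𝕜 W = Fintype.card ι) :
    span 𝕜 (range w) = W :=
  eq_of_le_of_finrank_eq (span_le.2 (range_subset_iff.2 hmem))
    (by rw [finrank_span_eq_card hw.linearIndependent, hW])

variable [Fintype ι]

lemma sum_norm_inner_sq_of_mem_span (hw : Orthonormal 𝕜 w) {x : E}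
    (hx : x ∈ span 𝕜 (range w)) : ∑ i, ‖⟪w i, x⟫_𝕜‖ ^ 2 = ‖x‖ ^ 2 := by
  obtain ⟨a, rfl⟩ := (mem_span_range_iff_exists_fun 𝕜).1 hx
  simp_rw [hw.inner_right_fintype]
  have : ((‖∑ i, a i • w i‖ ^ 2 : ℝ) : 𝕜) = ∑ i, ((‖a i‖ ^ 2 : ℝ) : 𝕜) := by
    push_cast
    rw [← inner_self_eq_norm_sq_to_K, hw.inner_sum]
    simp_rw [RCLike.conj_mul]
  exact_mod_cast this.symm

lemma sum_norm_inner_sq_eq_norm_starProjection (hw : Orthonormal 𝕜 w)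
    [(span 𝕜 (range w)).HasOrthogonalProjection] (x : E) :
    ∑ i, ‖⟪w i, x⟫_𝕜‖ ^ 2 = ‖(span 𝕜 (range w)).starProjection x‖ ^ 2 := by
  rw [← hw.sum_norm_inner_sq_of_mem_span (starProjection_apply_mem _ x)]
  congr! 3 with i
  rw [← sub_eq_zero, ← inner_sub_right]
  exact inner_right_of_mem_orthogonal (subset_span (mem_range_self i))
    (sub_starProjection_mem_orthogonal x)

lemma mul_norm_sq_le_sum_mul_norm_inner_sq (hw : Orthonormal 𝕜 w) {x : E}
    (hx : x ∈ span 𝕜 (range w)) {c : ι → ℝ} {a : ℝ} (h : ∀ i, ⟪w i, x⟫_𝕜 ≠ 0 → a ≤ c i) :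
    a * ‖x‖ ^ 2 ≤ ∑ i, c i * ‖⟪w i, x⟫_𝕜‖ ^ 2 := by
  rw [← hw.sum_norm_inner_sq_of_mem_span hx, Finset.mul_sum]
  refine Finset.sum_le_sum fun i _ => ?_
  by_cases h0 : ⟪w i, x⟫_𝕜 = 0
  · simp [h0]
  · exact mul_le_mul_of_nonneg_right (h i h0) (by positivity)

end Orthonormal

theorem Orthonormal.le_of_forall_sum_mul_norm_inner_sq_eq [FiniteDimensional 𝕜 E] {p : ℕ}
    {w s : Fin p → E} (hw : Orthonormal 𝕜 w) (hs : Orthonormal 𝕜 s)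
    (hspan : span 𝕜 (range w) = span 𝕜 (range s)) {c d : Fin p → ℝ} (hc : Antitone c)
    (hd : Antitone d)
    (h : ∀ x ∈ span 𝕜 (range w), ∑ i, c i * ‖⟪w i, x⟫_𝕜‖ ^ 2 = ∑ i, d i * ‖⟪s i, x⟫_𝕜‖ ^ 2)
    (k : Fin p) : c k ≤ d k := by
  -- Courant–Fischer: test both sums on a nonzero `x ∈ span {w i | i ≤ k} ⊓ span {s i | k ≤ i}`.
  set U := span 𝕜 (range (w ∘ ((↑) : Iic k → Fin p)))
  set V := span 𝕜 (range (s ∘ ((↑) : Ici k → Fin p)))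
  have hUW : U ≤ span 𝕜 (range w) := span_mono (range_comp_subset_range _ _)
  have hVW : V ≤ span 𝕜 (range w) := hspan ▸ span_mono (range_comp_subset_range _ _)
  have hdim : finrank 𝕜 (span 𝕜 (range w)) < finrank 𝕜 U + finrank 𝕜 V := by
    rw [finrank_span_eq_card hw.linearIndependent,
      finrank_span_eq_card (hw.linearIndependent.comp _ Subtype.val_injective),
      finrank_span_eq_card (hs.linearIndependent.comp _ Subtype.val_injective),
      Fintype.card_Iic, Fintype.card_Ici, Fin.card_Iic, Fin.card_Ici, Fintype.card_fin]
    omega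
  obtain ⟨x, ⟨hxU, hxV⟩, hx0⟩ :=
    (Submodule.ne_bot_iff _).1 (inf_ne_bot_of_finrank_lt_add hUW hVW hdim)
  have hxw := hUW hxU
  have hlower : c k * ‖x‖ ^ 2 ≤ ∑ i, c i * ‖⟪w i, x⟫_𝕜‖ ^ 2 :=
    hw.mul_norm_sq_le_sum_mul_norm_inner_sq hxw fun i hi => hc (hw.mem_of_inner_ne_zero hxU hi)
  have hupper : ∑ i, d i * ‖⟪s i, x⟫_𝕜‖ ^ 2 ≤ d k * ‖x‖ ^ 2 := by
    have := hs.mul_norm_sq_le_sum_mul_norm_inner_sq (hspan ▸ hxw) (c := -d) (a := -d k)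
      fun i hi => neg_le_neg (hd (hs.mem_of_inner_ne_zero hxV hi))
    simpa [neg_mul, Finset.sum_neg_distrib] using this
  exact le_of_mul_le_mul_right (hlower.trans ((h x hxw).trans_le hupper)) (by positivity)

variable [DecidableEq ι]

variable (𝕜) in
structure IsDiagonalPair (u v : ι → E) (c : ι → ℝ) : Prop where
  orthonormal_left : Orthonormal 𝕜 u
  orthonormal_right : Orthonormal 𝕜 v
  inner_eq : ∀ i j, ⟪u i, v j⟫_𝕜 = if i = j then (c i : 𝕜) else 0

namespace IsDiagonalPair

variable {u v : ι → E} {c : ι → ℝ}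

lemma inner_smul_add_smul (h : IsDiagonalPair 𝕜 u v c) (a b a' b' : ℝ) (i j : ι) :
    ⟪(a : 𝕜) • u i + (b : 𝕜) • v i, (a' : 𝕜) • u j + (b' : 𝕜) • v j⟫_𝕜 =
      if i = j then ((a * a' + (a * b' + b * a') * c i + b * b' : ℝ) : 𝕜) else 0 := by
  have hvu : ⟪v i, u j⟫_𝕜 = if i = j then (c i : 𝕜) else 0 := by
    rw [← inner_conj_symm, h.inner_eq]
    by_cases hij : i = j
    · subst hij; simp
    · simp [hij, Ne.symm hij]
  simp only [inner_add_left, inner_add_right, inner_smul_left, inner_smul_right,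
    RCLike.conj_ofReal, orthonormal_iff_ite.1 h.orthonormal_left,
    orthonormal_iff_ite.1 h.orthonormal_right, h.inner_eq, hvu]
  split_ifs <;> push_cast <;> ring

lemma exists_orthogonal (h : IsDiagonalPair 𝕜 u v c) (hc : ∀ i, c i ^ 2 < 1) :
    ∃ u' v' : ι → E, IsDiagonalPair 𝕜 u' v' c ∧ (∀ i, u' i ∈ (span 𝕜 (range u))ᗮ) ∧
      ∀ i, v' i ∈ (span 𝕜 (range v))ᗮ := by
  -- `u' i` and `v' i` are the unit vectors of `span {u i, v i}` orthogonal to `u i` and `v i`.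
  set s : ι → ℝ := fun i => √(1 - c i ^ 2)
  have hs : ∀ i, s i ^ 2 = 1 - c i ^ 2 := fun i => Real.sq_sqrt (by linarith [hc i])
  have hs₀ : ∀ i, s i ≠ 0 := fun i => Real.sqrt_ne_zero'.2 (by linarith [hc i])
  have hu : ∀ j, u j = ((1 : ℝ) : 𝕜) • u j + ((0 : ℝ) : 𝕜) • v j := by simp
  have hv : ∀ j, v j = ((0 : ℝ) : 𝕜) • u j + ((1 : ℝ) : 𝕜) • v j := by simp
  refine ⟨fun i => ((-(c i / s i) : ℝ) : 𝕜) • u i + ((1 / s i : ℝ) : 𝕜) • v i,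
    fun i => ((-(1 / s i) : ℝ) : 𝕜) • u i + ((c i / s i : ℝ) : 𝕜) • v i,
    ⟨orthonormal_iff_ite.2 fun i j => ?_, orthonormal_iff_ite.2 fun i j => ?_, fun i j => ?_⟩,
    fun i => mem_orthogonal_span_range_iff.2 fun j => ?_,
    fun i => mem_orthogonal_span_range_iff.2 fun j => ?_⟩
  · rw [h.inner_smul_add_smul]
    split_ifs with hij
    · subst hij
      norm_cast
      field_simp [hs₀ i]
      linear_combination -(hs i)
    · rfl
  · rw [h.inner_smul_add_smul]
    split_ifs with hij
    · subst hij
      norm_cast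
      field_simp [hs₀ i]
      linear_combination -(hs i)
    · rfl
  · rw [h.inner_smul_add_smul]
    split_ifs with hij
    · subst hij
      norm_cast
      field_simp [hs₀ i]
      linear_combination -c i * hs i
    · rfl
  · rw [hu j, h.inner_smul_add_smul]
    split_ifs with hij
    · subst hij
      norm_cast
      field_simp [hs₀ j]
      ring
    · rfl
  · rw [hv j, h.inner_smul_add_smul]
    split_ifs with hij
    · subst hij
      norm_cast
      field_simp [hs₀ j]
      ring
    · rfl

lemma inner_right_eq_mul_inner_left (h : IsDiagonalPair 𝕜 u v c) {x : E}
    (hx : x ∈ span 𝕜 (range u)) (j : ι) : ⟪v j, x⟫_𝕜 = c j * ⟪u j, x⟫_𝕜 := by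
  have hperp : v j - (c j : 𝕜) • u j ∈ (span 𝕜 (range u))ᗮ := by
    refine mem_orthogonal_span_range_iff.2 fun i => ?_
    rw [inner_sub_right, inner_smul_right, h.inner_eq, orthonormal_iff_ite.1 h.orthonormal_left]
    split_ifs with hij
    · rw [hij]; ring
    · ring
  have := inner_left_of_mem_orthogonal hx hperp
  rwa [inner_sub_left, inner_smul_left, RCLike.conj_ofReal, sub_eq_zero] at this

lemma sum_sq_mul_norm_inner_sq_eq [Fintype ι] (h : IsDiagonalPair 𝕜 u v c)
    [(span 𝕜 (range v)).HasOrthogonalProjection] {x : E} (hx : x ∈ span 𝕜 (range u)) :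
    ∑ i, c i ^ 2 * ‖⟪u i, x⟫_𝕜‖ ^ 2 = ‖(span 𝕜 (range v)).starProjection x‖ ^ 2 := by
  simp_rw [← h.orthonormal_right.sum_norm_inner_sq_eq_norm_starProjection,
    h.inner_right_eq_mul_inner_left hx, norm_mul, RCLike.norm_ofReal, mul_pow, sq_abs]

lemma eq_of_span_eq [FiniteDimensional 𝕜 E] {p : ℕ} {u v u' v' : Fin p → E} {c d : Fin p → ℝ}
    (h : IsDiagonalPair 𝕜 u v c) (h' : IsDiagonalPair 𝕜 u' v' d)
    (hu : span 𝕜 (range u) = span 𝕜 (range u')) (hv : span 𝕜 (range v) = span 𝕜 (range v'))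
    (hc : Antitone c) (hd : Antitone d) (hc₀ : 0 ≤ c) (hd₀ : 0 ≤ d) : c = d := by
  have hc2 : Antitone (c ^ 2) := fun i j hij => pow_le_pow_left₀ (hc₀ j) (hc hij) 2
  have hd2 : Antitone (d ^ 2) := fun i j hij => pow_le_pow_left₀ (hd₀ j) (hd hij) 2
  have hsum : ∀ x ∈ span 𝕜 (range u),
      ∑ i, c i ^ 2 * ‖⟪u i, x⟫_𝕜‖ ^ 2 = ∑ i, d i ^ 2 * ‖⟪u' i, x⟫_𝕜‖ ^ 2 := fun x hx => by
    rw [h.sum_sq_mul_norm_inner_sq_eq hx, h'.sum_sq_mul_norm_inner_sq_eq (hu ▸ hx), hv]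
  funext k
  have hle := h.orthonormal_left.le_of_forall_sum_mul_norm_inner_sq_eq h'.orthonormal_left hu
    hc2 hd2 hsum k
  have hge := h'.orthonormal_left.le_of_forall_sum_mul_norm_inner_sq_eq h.orthonormal_left hu.symm
    hd2 hc2 (fun x hx => (hsum x (hu ▸ hx)).symm) k
  exact (pow_left_inj₀ (hc₀ k) (hd₀ k) two_ne_zero).1 (le_antisymm hle hge)

end IsDiagonalPair

end

namespace IsPrincipalSystem

variable {n q : ℕ} {M N : Submodule ℂ (EuclideanSpace ℂ (Fin n))}
  {u v : Fin q → EuclideanSpace ℂ (Fin n)} {θ : Fin q → ℝ}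

lemma symm (h : IsPrincipalSystem M N u v θ) : IsPrincipalSystem N M v u θ := by
  intro i
  obtain ⟨huM, hvN, hu, hv, horth, hθ, hcos, hmax⟩ := h i
  refine ⟨hvN, huM, hv, hu, fun j hj => (horth j hj).symm, hθ, ?_, ?_⟩
  · rw [← inner_conj_symm, hcos, Complex.conj_ofReal]
  · intro y hy x hx hy₁ hx₁ hvy hux
    rw [← inner_conj_symm, Complex.norm_conj]
    exact hmax x hx y hy hx₁ hy₁ hux hvy

lemma orthonormal_left (h : IsPrincipalSystem M N u v θ) : Orthonormal ℂ u := by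
  refine ⟨fun i => (h i).2.2.1, fun i j hij => ?_⟩
  rcases hij.lt_or_gt with hlt | hgt
  · exact ((h j).2.2.2.2.1 i hlt).1
  · rw [← inner_conj_symm, ((h i).2.2.2.2.1 j hgt).1, map_zero]

lemma orthonormal_right (h : IsPrincipalSystem M N u v θ) : Orthonormal ℂ v :=
  h.symm.orthonormal_left

lemma mem_Icc (h : IsPrincipalSystem M N u v θ) (i : Fin q) : θ i ∈ Icc 0 Real.pi :=
  ⟨(h i).2.2.2.2.2.1.1, (h i).2.2.2.2.2.1.2.trans (by linarith [Real.pi_pos])⟩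

lemma cos_nonneg (h : IsPrincipalSystem M N u v θ) (i : Fin q) : 0 ≤ Real.cos (θ i) :=
  Real.cos_nonneg_of_mem_Icc ⟨by linarith [(h i).2.2.2.2.2.1.1, Real.pi_pos],
    (h i).2.2.2.2.2.1.2⟩

lemma antitone_cos (h : IsPrincipalSystem M N u v θ) (hθ : Monotone θ) :
    Antitone fun i => Real.cos (θ i) := fun i j hij =>
  Real.cos_le_cos_of_nonneg_of_le_pi (h.mem_Icc i).1 (h.mem_Icc j).2 (hθ hij)

lemma norm_inner_le_cos_mul_norm (h : IsPrincipalSystem M N u v θ) (i : Fin q)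
    {x y : EuclideanSpace ℂ (Fin n)} (hx : x ∈ M) (hy : y ∈ N) (hx₁ : ‖x‖ = 1)
    (hux : ∀ j < i, ⟪u j, x⟫ = 0) (hvy : ∀ j < i, ⟪v j, y⟫ = 0) :
    ‖⟪x, y⟫‖ ≤ Real.cos (θ i) * ‖y‖ := by
  rcases eq_or_ne y 0 with rfl | hy₀
  · simp
  have hy' : ‖y‖ ≠ 0 := norm_ne_zero_iff.2 hy₀
  have hmax := (h i).2.2.2.2.2.2.2 x hx ((‖y‖⁻¹ : ℂ) • y) (N.smul_mem _ hy) hx₁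
    (by rw [norm_smul, norm_inv, Complex.norm_real, Real.norm_eq_abs, abs_norm,
      inv_mul_cancel₀ hy'])
    hux (fun j hj => by rw [inner_smul_right, hvy j hj, mul_zero])
  rw [inner_smul_right, norm_mul, norm_inv, Complex.norm_real, Real.norm_eq_abs, abs_norm,
    inv_mul_le_iff₀ (norm_pos_iff.2 hy₀), mul_comm] at hmax
  exact hmax

lemma inner_eq_zero_of_lt (h : IsPrincipalSystem M N u v θ) {i j : Fin q} (hij : i < j) :
    ⟪u i, v j⟫ = 0 := by
  -- `y` is admissible at step `i` and `⟪u i, y⟫ = ‖y‖²`, so maximality gives `‖y‖ ≤ cos θᵢ`.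
  set c := Real.cos (θ i)
  set g := ⟪u i, v j⟫
  have hv := h.orthonormal_right
  set y := (c : ℂ) • v i + (starRingEnd ℂ) g • v j
  have hyN : y ∈ N := N.add_mem (N.smul_mem _ (h i).2.1) (N.smul_mem _ (h j).2.1)
  have hvy : ∀ k < i, ⟪v k, y⟫ = 0 := fun k hk => by
    rw [inner_add_right, inner_smul_right, inner_smul_right, hv.inner_eq_zero hk.ne,
      hv.inner_eq_zero (hk.trans hij).ne, mul_zero, mul_zero, add_zero]
  have hinner : ⟪u i, y⟫ = ((c ^ 2 + ‖g‖ ^ 2 : ℝ) : ℂ) := by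
    rw [inner_add_right, inner_smul_right, inner_smul_right,
      show ⟪u i, v i⟫ = c from (h i).2.2.2.2.2.2.1, Complex.conj_mul']
    push_cast; ring
  have hnorm : ‖y‖ ^ 2 = c ^ 2 + ‖g‖ ^ 2 := by
    rw [sq, norm_add_sq_eq_norm_sq_add_norm_sq_of_inner_eq_zero (𝕜 := ℂ), norm_smul, norm_smul,
      Complex.norm_real, Real.norm_eq_abs, Complex.norm_conj, hv.norm_eq_one, hv.norm_eq_one]
    · rw [← sq_abs c]; ring
    · rw [inner_smul_left, inner_smul_right, hv.inner_eq_zero hij.ne, mul_zero, mul_zero]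
  have hle := h.norm_inner_le_cos_mul_norm i (h i).1 hyN (h i).2.2.1
    (fun k hk => (h.orthonormal_left.inner_eq_zero hk.ne)) hvy
  rw [hinner, Complex.norm_real, Real.norm_eq_abs, abs_of_nonneg (by positivity), ← hnorm] at hle
  have hyc : ‖y‖ ≤ c := by nlinarith [h.cos_nonneg i, norm_nonneg y]
  exact norm_eq_zero.1 (by nlinarith [norm_nonneg g, norm_nonneg y])

lemma isDiagonalPair (h : IsPrincipalSystem M N u v θ) :
    IsDiagonalPair ℂ u v fun i => Real.cos (θ i) := by
  refine ⟨h.orthonormal_left, h.orthonormal_right, fun i j => ?_⟩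
  split_ifs with hij
  · subst hij; exact (h i).2.2.2.2.2.2.1
  · rcases lt_or_gt_of_ne hij with hlt | hgt
    · exact h.inner_eq_zero_of_lt hlt
    · rw [← inner_conj_symm, h.symm.inner_eq_zero_of_lt hgt, map_zero]

lemma cos_sq_lt_one (h : IsPrincipalSystem M N u v θ) (hMN : M ⊓ N = ⊥) (i : Fin q) :
    Real.cos (θ i) ^ 2 < 1 := by
  refine (sq_lt_one_iff₀ (h.cos_nonneg i)).2 ((Real.cos_le_one _).lt_of_ne fun h1 => ?_)
  have huv : u i = v i := (inner_eq_one_iff_of_norm_eq_one (h i).2.2.1 (h i).2.2.2.1).1 <| by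
    rw [(h i).2.2.2.2.2.2.1, h1, Complex.ofReal_one]
  have hbot : u i ∈ M ⊓ N := ⟨(h i).1, huv ▸ (h i).2.1⟩
  rw [hMN, mem_bot] at hbot
  simpa [hbot] using (h i).2.2.1

lemma span_range_left (h : IsPrincipalSystem M N u v θ) (hM : finrank ℂ M = q) :
    span ℂ (range u) = M :=
  h.orthonormal_left.span_range_eq_of_finrank_eq (fun i => (h i).1) (by simpa using hM)

lemma span_range_right (h : IsPrincipalSystem M N u v θ) (hN : finrank ℂ N = q) :
    span ℂ (range v) = N :=
  h.symm.span_range_left hN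

end IsPrincipalSystem

theorem principal_angles_eq_of_generalized_generic_position_general {n p : ℕ}
    (M N : Submodule ℂ (EuclideanSpace ℂ (Fin n)))
    (hMN : M ⊓ N = ⊥) (hM'N' : Mᗮ ⊓ Nᗮ = ⊥)
    (hM : Module.finrank ℂ M = p) (hN : Module.finrank ℂ N = p)
    (u v s t : Fin p → EuclideanSpace ℂ (Fin n)) (θ η : Fin p → ℝ)
    (hθmono : Monotone θ) (hηmono : Monotone η)
    (hθ : IsPrincipalSystem M N u v θ)
    (hη : IsPrincipalSystem Mᗮ Nᗮ s t η) :
    ∀ i : Fin p, θ i = η i := by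
  have hM' : finrank ℂ Mᗮ = p :=
    (finrank_orthogonal_eq_of_inf_eq_bot hMN hM'N' (hM.trans hN.symm)).trans hM
  have hN' : finrank ℂ Nᗮ = p :=
    (finrank_orthogonal_eq_of_inf_eq_bot (inf_comm M N ▸ hMN) (inf_comm Mᗮ Nᗮ ▸ hM'N')
      (hN.trans hM.symm)).trans hN
  obtain ⟨w, w', hww', hwM, hw'N⟩ := hθ.isDiagonalPair.exists_orthogonal (hθ.cos_sq_lt_one hMN)
  rw [hθ.span_range_left hM] at hwM
  rw [hθ.span_range_right hN] at hw'N
  have hcos := hww'.eq_of_span_eq hη.isDiagonalPair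
    (by rw [hη.span_range_left hM', hww'.orthonormal_left.span_range_eq_of_finrank_eq hwM
      (by simpa using hM')])
    (by rw [hη.span_range_right hN', hww'.orthonormal_right.span_range_eq_of_finrank_eq hw'N
      (by simpa using hN')])
    (hθ.antitone_cos hθmono) (hη.antitone_cos hηmono) hθ.cos_nonneg hη.cos_nonneg
  exact fun i => Real.injOn_cos (hθ.mem_Icc i) (hη.mem_Icc i) (congrFun hcos i)

/-- If `M`, `N` are subspaces of `ℂⁿ` in generalized generic position
(`M ⊓ N = Mᗮ ⊓ Nᗮ = ⊥` and `dim (M ⊓ Nᗮ) = dim (Mᗮ ⊓ N)`) with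
`dim M = dim N = p`, then the principal angles `θ` between `M` and `N` coincide
with the principal angles `η` between `Mᗮ` and `Nᗮ`. -/
theorem principal_angles_eq_of_generalized_generic_position {n p : ℕ}
    (M N : Submodule ℂ (EuclideanSpace ℂ (Fin n)))
    (hMN : M ⊓ N = ⊥) (hM'N' : Mᗮ ⊓ Nᗮ = ⊥)
    (hcd : Module.finrank ℂ (M ⊓ Nᗮ : Submodule ℂ (EuclideanSpace ℂ (Fin n))) =
      Module.finrank ℂ (Mᗮ ⊓ N : Submodule ℂ (EuclideanSpace ℂ (Fin n))))
    (hM : Module.finrank ℂ M = p) (hN : Module.finrank ℂ N = p)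
    (u v s t : Fin p → EuclideanSpace ℂ (Fin n)) (θ η : Fin p → ℝ)
    (hθmono : Monotone θ) (hηmono : Monotone η)
    (hθ : IsPrincipalSystem M N u v θ)
    (hη : IsPrincipalSystem Mᗮ Nᗮ s t η) :
    ∀ i : Fin p, θ i = η i :=
  principal_angles_eq_of_generalized_generic_position_general M N hMN hM'N' hM hN u v s t θ η hθmono
    hηmono hθ hη
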